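/- arXiv:2505.05134 — 6 statements merged into one kernel-verified Lean document; each statement's English description precedes it below -/
import Mathlib

section
/- (Frobenius inequality for Bochner matrices) Let A ∈ H^{m×n}, B ∈ 𝔽^{n×k}, C ∈ 𝔽^{k×l}. Then rank_c(A·B·C) ≥ rank_c(A·B) + rank(B·C) − rank(B). -/
open scoped BigOperators

noncomputable def bmul {𝕜 H : Type*} [RCLike 𝕜] [NormedAddCommGroup H]
    [InnerProductSpace 𝕜 H] {m : ℕ} {ι : Type*} [Fintype ι]
    (A : Fin m → ι → H) : (ι → 𝕜) →ₗ[𝕜] (Fin m → H) where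
  toFun x := fun i => ∑ j, x j • A i j
  map_add' x y := by
    funext i
    simp [add_smul, Finset.sum_add_distrib]
  map_smul' c x := by
    funext i
    simp [smul_smul, Finset.smul_sum]

/-- The column rank of a Bochner matrix: the dimension of the image of `x ↦ A·x`. -/
noncomputable def crank (𝕜 : Type*) {H : Type*} [RCLike 𝕜] [NormedAddCommGroup H]
    [InnerProductSpace 𝕜 H] {m : ℕ} {ι : Type*} [Fintype ι]
    (A : Fin m → ι → H) : ℕ :=
  Module.finrank 𝕜 (LinearMap.range (bmul (𝕜 := 𝕜) A))

lemma finrank_map_add_finrank_inf {𝕜 V W : Type*} [Field 𝕜] [AddCommGroup V] [Module 𝕜 V]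
    [AddCommGroup W] [Module 𝕜 W] (f : V →ₗ[𝕜] W) (S : Submodule 𝕜 V)
    [FiniteDimensional 𝕜 S] :
    Module.finrank 𝕜 (S.map f) + Module.finrank 𝕜 ((LinearMap.ker f) ⊓ S : Submodule 𝕜 V)
      = Module.finrank 𝕜 S := by
  have h := LinearMap.finrank_range_add_finrank_ker (f.domRestrict S)
  rw [LinearMap.range_domRestrict, LinearMap.ker_domRestrict] at h
  have e : Submodule.comap S.subtype (LinearMap.ker f)
      = Submodule.comap S.subtype (LinearMap.ker f ⊓ S) := by
    simp [Submodule.comap_inf]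
  rw [e, (Submodule.comapSubtypeEquivOfLe
    (inf_le_right : LinearMap.ker f ⊓ S ≤ S)).finrank_eq] at h
  exact h

lemma bmul_comp {𝕜 H : Type*} [RCLike 𝕜] [NormedAddCommGroup H]
    [InnerProductSpace 𝕜 H] {m n k : ℕ}
    (A : Fin m → Fin n → H) (B : Matrix (Fin n) (Fin k) 𝕜) :
    bmul (𝕜 := 𝕜) (fun i j => ∑ s, B s j • A i s)
      = (bmul (𝕜 := 𝕜) A) ∘ₗ B.mulVecLin := by
  apply LinearMap.ext
  intro x
  funext i
  simp only [bmul, LinearMap.coe_mk, AddHom.coe_mk, LinearMap.comp_apply,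
    Matrix.mulVecLin_apply, Matrix.mulVec, dotProduct]
  simp only [Finset.smul_sum]
  rw [Finset.sum_comm]
  simp [Finset.sum_smul, smul_smul, mul_comm]

/-- Frobenius inequality for Bochner matrices:
`rank_c(A·B·C) ≥ rank_c(A·B) + rank(B·C) − rank(B)`. -/
theorem bochner_frobenius_inequality {𝕜 H : Type*} [RCLike 𝕜] [NormedAddCommGroup H]
    [InnerProductSpace 𝕜 H] [CompleteSpace H] {m n k l : ℕ}
    (A : Fin m → Fin n → H) (B : Matrix (Fin n) (Fin k) 𝕜) (C : Matrix (Fin k) (Fin l) 𝕜) :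
    crank 𝕜 (fun i j => ∑ s, B s j • A i s) + (B * C).rank ≤
      crank 𝕜 (fun i j => ∑ t, (B * C) t j • A i t) + B.rank := by
  set F := bmul (𝕜 := 𝕜) A
  set Rg := LinearMap.range B.mulVecLin
  set Rgh := LinearMap.range (B * C).mulVecLin
  have hle : Rgh ≤ Rg := by
    show LinearMap.range (B * C).mulVecLin ≤ LinearMap.range B.mulVecLin
    rw [Matrix.mulVecLin_mul]
    exact LinearMap.range_comp_le_range _ _
  have h1 : crank 𝕜 (fun i j => ∑ s, B s j • A i s) = Module.finrank 𝕜 (Rg.map F) := by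
    rw [crank, bmul_comp, LinearMap.range_comp]
  have h2 : crank 𝕜 (fun i j => ∑ t, (B * C) t j • A i t)
      = Module.finrank 𝕜 (Rgh.map F) := by
    rw [crank, bmul_comp, LinearMap.range_comp]
  have hB : B.rank = Module.finrank 𝕜 Rg := rfl
  have hBC : (B * C).rank = Module.finrank 𝕜 Rgh := rfl
  have e1 := finrank_map_add_finrank_inf F Rg
  have e2 := finrank_map_add_finrank_inf F Rgh
  have hmono : Module.finrank 𝕜 ((LinearMap.ker F) ⊓ Rgh : Submodule 𝕜 (Fin n → 𝕜))
      ≤ Module.finrank 𝕜 ((LinearMap.ker F) ⊓ Rg : Submodule 𝕜 (Fin n → 𝕜)) :=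
    Submodule.finrank_mono (inf_le_inf_left _ hle)
  rw [h1, h2, hB, hBC]
  omega
end

section
/- (SVD of Bochner matrices) Let A ∈ H^{m×n} be a nonzero Bochner matrix with column rank r. Then there exist σ₁ ≥ ⋯ ≥ σ_r > 0, a Bochner matrix U ∈ H^{m×r} with orthonormal columns, and V ∈ 𝔽^{n×r} with orthonormal columns such that A = U·Σ·V*, where Σ = diag(σ₁,…,σ_r). Moreover the σ_i are uniquely determined (they are the square roots of the nonzero eigenvalues of the positive semidefinite matrix A*A ∈ 𝔽^{n×n}). -/
open scoped BigOperators

/-!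
The Bochner matrix `A` is the linear map `T : 𝔽ⁿ → H^m`, `x ↦ ∑ⱼ xⱼ aⱼ`, and `A = U Σ V*` says
`T x = ∑ₛ σₛ ⟪vₛ, x⟫ uₛ` with orthonormal `(uₛ)`, `(vₛ)`. The range of `T` is finite-dimensional,
so the spectral theorem for `T* T` (with `T` corestricted to its range) gives an orthonormal
eigenbasis `(vᵢ)` with `⟪T vᵢ, T vⱼ⟫ = σᵢ² δᵢⱼ`; the `vᵢ` with `σᵢ > 0` and `uᵢ = σᵢ⁻¹ T vᵢ` give
the decomposition. Conversely, any decomposition yields `⟪T x, T y⟫ = ⟪x, ∑ₛ σₛ² ⟪vₛ, y⟫ vₛ⟫`, so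
this operator depends only on `T`, and the multiplicity of each value `σₛ²` is the dimension of one
of its eigenspaces. Two antitone tuples with the same multiplicities are equal.
-/

open Module InnerProductSpace
open scoped InnerProductSpace Matrix

section DiagonalOperator

variable {𝕜 E : Type*} [RCLike 𝕜] [NormedAddCommGroup E] [InnerProductSpace 𝕜 E]
  {ι : Type*} [Fintype ι]

noncomputable def diagonalOperator (v : ι → E) (c : ι → 𝕜) : E →ₗ[𝕜] E :=
  ∑ s, c s • (rankOne 𝕜 (v s) (v s) : E →ₗ[𝕜] E)

theorem diagonalOperator_apply (v : ι → E) (c : ι → 𝕜) (x : E) :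
    diagonalOperator v c x = ∑ s, (c s * ⟪v s, x⟫_𝕜) • v s := by
  simp [diagonalOperator, smul_smul]

theorem diagonalOperator_apply_self {v : ι → E} (hv : Orthonormal 𝕜 v) (c : ι → 𝕜) (t : ι) :
    diagonalOperator v c (v t) = c t • v t := by
  classical
  simp [diagonalOperator_apply, orthonormal_iff_ite.1 hv]

theorem eigenspace_diagonalOperator {v : ι → E} (hv : Orthonormal 𝕜 v) (c : ι → 𝕜) {μ : 𝕜}
    (hμ : μ ≠ 0) :
    End.eigenspace (diagonalOperator v c) μ =
      Submodule.span 𝕜 (Set.range fun s : {s // c s = μ} => v s) := by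
  apply le_antisymm
  · intro x hx
    rw [End.mem_eigenspace_iff, diagonalOperator_apply] at hx
    set a : ι → 𝕜 := fun s => μ⁻¹ * (c s * ⟪v s, x⟫_𝕜)
    have hx_eq : x = ∑ s, a s • v s := by
      rw [← inv_smul_smul₀ hμ x, ← hx, Finset.smul_sum]
      simp_rw [smul_smul]
      rfl
    have ha : ∀ s, c s ≠ μ → a s = 0 := by
      intro s hs
      have h : a s = μ⁻¹ * (c s * a s) := by
        conv_rhs => rw [← hv.inner_right_fintype a s, ← hx_eq]
      have : (μ - c s) * a s = 0 := by
        field_simp at h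
        linear_combination h
      exact (mul_eq_zero.1 this).resolve_left (sub_ne_zero.2 (Ne.symm hs))
    rw [hx_eq]
    refine Submodule.sum_mem _ fun s _ => ?_
    by_cases hs : c s = μ
    · exact Submodule.smul_mem _ _ (Submodule.subset_span ⟨⟨s, hs⟩, rfl⟩)
    · simp [ha s hs]
  · rw [Submodule.span_le]
    rintro _ ⟨⟨t, rfl⟩, rfl⟩
    exact End.mem_eigenspace_iff.2 (diagonalOperator_apply_self hv c t)

theorem finrank_eigenspace_diagonalOperator {v : ι → E} (hv : Orthonormal 𝕜 v) (c : ι → 𝕜)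
    {μ : 𝕜} (hμ : μ ≠ 0) :
    finrank 𝕜 (End.eigenspace (diagonalOperator v c) μ) = Nat.card {s // c s = μ} := by
  rw [eigenspace_diagonalOperator hv c hμ, Nat.card_eq_fintype_card,
    ← finrank_span_eq_card (hv.comp _ Subtype.val_injective).linearIndependent]
  rfl

end DiagonalOperator

theorem eq_of_antitone_of_card_fiber_eq {α : Type*} [PartialOrder α] {r : ℕ}
    {σ σ' : Fin r → α} (hσ : Antitone σ) (hσ' : Antitone σ')
    (h : ∀ a, Nat.card {s // σ s = a} = Nat.card {s // σ' s = a}) : σ = σ' := by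
  classical
  have hmap : Finset.univ.val.map σ = Finset.univ.val.map σ' := by
    ext a
    simpa only [Multiset.count_map, ← Finset.filter_val, ← Finset.card_def, eq_comm,
      Nat.card_eq_fintype_card, Fintype.card_subtype] using h a
  rw [Fin.univ_val_map, Fin.univ_val_map, Multiset.coe_eq_coe] at hmap
  exact List.ofFn_injective (hmap.eq_of_sortedGE hσ.sortedGE_ofFn hσ'.sortedGE_ofFn)

namespace LinearMap

variable {𝕜 E F : Type*} [RCLike 𝕜] [NormedAddCommGroup E] [InnerProductSpace 𝕜 E]
  [NormedAddCommGroup F] [InnerProductSpace 𝕜 F]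

structure IsSVD {ι : Type*} [Fintype ι] (T : E →ₗ[𝕜] F) (σ : ι → ℝ) (u : ι → F) (v : ι → E) :
    Prop where
  orthonormal_left : Orthonormal 𝕜 u
  orthonormal_right : Orthonormal 𝕜 v
  apply_eq : ∀ x, T x = ∑ s, ((σ s : 𝕜) * ⟪v s, x⟫_𝕜) • u s

namespace IsSVD

variable {T : E →ₗ[𝕜] F} {ι κ : Type*} [Fintype ι] [Fintype κ]
  {σ : ι → ℝ} {u : ι → F} {v : ι → E} {σ' : κ → ℝ} {u' : κ → F} {v' : κ → E}

theorem inner_apply_apply (h : T.IsSVD σ u v) (x y : E) :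
    ⟪T x, T y⟫_𝕜 = ⟪x, diagonalOperator v (fun s => ((σ s ^ 2 : ℝ) : 𝕜)) y⟫_𝕜 := by
  rw [h.apply_eq x, h.apply_eq y, h.orthonormal_left.inner_sum, diagonalOperator_apply, inner_sum]
  refine Finset.sum_congr rfl fun s _ => ?_
  rw [inner_smul_right, ← inner_conj_symm x (v s)]
  simp only [map_mul, RCLike.conj_ofReal]
  push_cast
  ring

theorem diagonalOperator_eq (h : T.IsSVD σ u v) (h' : T.IsSVD σ' u' v') :
    diagonalOperator v (fun s => ((σ s ^ 2 : ℝ) : 𝕜)) =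
      diagonalOperator v' (fun s => ((σ' s ^ 2 : ℝ) : 𝕜)) :=
  LinearMap.ext fun y => ext_inner_left 𝕜 fun x => by
    rw [← h.inner_apply_apply, h'.inner_apply_apply]

theorem card_fiber_sq_eq (h : T.IsSVD σ u v) (h' : T.IsSVD σ' u' v') (hσ : ∀ s, σ s ≠ 0)
    (hσ' : ∀ s, σ' s ≠ 0) (a : ℝ) :
    Nat.card {s // σ s ^ 2 = a} = Nat.card {s // σ' s ^ 2 = a} := by
  rcases eq_or_ne a 0 with rfl | ha
  · simp [hσ, hσ']
  have key := congrArg (fun G => finrank 𝕜 (End.eigenspace G (a : 𝕜))) (h.diagonalOperator_eq h')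
  simpa only [RCLike.ofReal_inj,
    finrank_eigenspace_diagonalOperator h.orthonormal_right _ (RCLike.ofReal_ne_zero.2 ha),
    finrank_eigenspace_diagonalOperator h'.orthonormal_right _ (RCLike.ofReal_ne_zero.2 ha)]
    using key

theorem eq_of_antitone {r : ℕ} {σ σ' : Fin r → ℝ} {u u' : Fin r → F} {v v' : Fin r → E}
    (h : T.IsSVD σ u v) (h' : T.IsSVD σ' u' v') (hσ : Antitone σ) (hσ' : Antitone σ')
    (hσ₀ : ∀ s, 0 < σ s) (hσ₀' : ∀ s, 0 < σ' s) : σ = σ' := by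
  have hsq : (σ · ^ 2) = (σ' · ^ 2) :=
    eq_of_antitone_of_card_fiber_eq
      (fun s t hst => pow_le_pow_left₀ (hσ₀ t).le (hσ hst) 2)
      (fun s t hst => pow_le_pow_left₀ (hσ₀' t).le (hσ' hst) 2)
      (h.card_fiber_sq_eq h' (fun s => (hσ₀ s).ne') (fun s => (hσ₀' s).ne'))
  funext s
  exact (pow_left_inj₀ (hσ₀ s).le (hσ₀' s).le two_ne_zero).1 (congrFun hsq s)

theorem comp_linearIsometry {G : Type*} [NormedAddCommGroup G] [InnerProductSpace 𝕜 G]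
    (h : T.IsSVD σ u v) (L : F →ₗᵢ[𝕜] G) : (L.toLinearMap ∘ₗ T).IsSVD σ (L ∘ u) v where
  orthonormal_left := h.orthonormal_left.comp_linearIsometry L
  orthonormal_right := h.orthonormal_right
  apply_eq x := by simp [h.apply_eq x]

end IsSVD

section Existence

variable [FiniteDimensional 𝕜 E]

theorem inner_apply_eigenvectorBasis_adjoint_comp_self [FiniteDimensional 𝕜 F] (T : E →ₗ[𝕜] F)
    (i j : Fin (finrank 𝕜 E)) :
    letI b := T.isSymmetric_adjoint_comp_self.eigenvectorBasis rfl
    ⟪T (b i), T (b j)⟫_𝕜 = if i = j then ((T.singularValues i ^ 2 : ℝ) : 𝕜) else 0 := by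
  rw [← adjoint_inner_right, ← comp_apply, IsSymmetric.apply_eigenvectorBasis, inner_smul_right,
    orthonormal_iff_ite.1 (OrthonormalBasis.orthonormal _), T.sq_singularValues_fin rfl]
  split_ifs with hij <;> simp [hij]

theorem exists_isSVD_singularValues [FiniteDimensional 𝕜 F] (T : E →ₗ[𝕜] F) :
    ∃ u v, T.IsSVD (fun s : Fin (finrank 𝕜 (range T)) => T.singularValues s) u v := by
  set b := T.isSymmetric_adjoint_comp_self.eigenvectorBasis rfl
  have hb := T.inner_apply_eigenvectorBasis_adjoint_comp_self
  set e : Fin (finrank 𝕜 (range T)) → Fin (finrank 𝕜 E) := Fin.castLE T.finrank_range_le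
  have he : Function.Injective e := Fin.castLE_injective _
  set σ : Fin (finrank 𝕜 (range T)) → ℝ := fun s => T.singularValues s
  have hσ : ∀ s, (σ s : 𝕜) ≠ 0 := fun s =>
    RCLike.ofReal_ne_zero.2 (T.singularValues_pos_iff_lt_finrank_range.2 s.isLt).ne'
  have hker : ∀ i ∉ Set.range e, T (b i) = 0 := by
    intro i hi
    have hσi : T.singularValues i = 0 := T.singularValues_eq_zero_iff_le_finrank_range.2
      (not_lt.1 fun hlt => hi ⟨⟨i, hlt⟩, rfl⟩)
    simpa [hσi] using hb i i
  refine ⟨fun s => (σ s : 𝕜)⁻¹ • T (b (e s)), b ∘ e, ⟨?_, b.orthonormal.comp e he, fun x => ?_⟩⟩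
  · refine orthonormal_iff_ite.2 fun s t => ?_
    rw [inner_smul_left, inner_smul_right, hb]
    by_cases hst : s = t
    · subst hst
      simp only [RCLike.conj_inv, RCLike.conj_ofReal, RCLike.ofReal_pow, if_true]
      field_simp [hσ s]
      rfl
    · simp [he.ne hst, hst]
  · conv_lhs => rw [← b.sum_repr' x, map_sum]
    refine (Fintype.sum_of_injective e he _ _ (fun i hi => by rw [map_smul, hker i hi, smul_zero])
      fun s => ?_).symm
    rw [map_smul, mul_comm, mul_smul, smul_inv_smul₀ (hσ s)]
    rfl

theorem exists_isSVD (T : E →ₗ[𝕜] F) {r : ℕ} (hr : finrank 𝕜 (range T) = r) :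
    ∃ (σ : Fin r → ℝ) (u : Fin r → F) (v : Fin r → E),
      Antitone σ ∧ (∀ s, 0 < σ s) ∧ T.IsSVD σ u v := by
  obtain ⟨u, v, h⟩ := T.rangeRestrict.exists_isSVD_singularValues
  have hr' : finrank 𝕜 (range T.rangeRestrict) = r := by rw [range_rangeRestrict, finrank_top, hr]
  subst hr'
  exact ⟨_, _, v, T.rangeRestrict.singularValues_antitone.comp_monotone Fin.val_strictMono.monotone,
    fun s => T.rangeRestrict.singularValues_pos_iff_lt_finrank_range.2 s.isLt,
    h.comp_linearIsometry (range T).subtypeₗᵢ⟩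

end Existence

end LinearMap

section BochnerMatrix

variable {𝕜 H : Type*} [RCLike 𝕜] [NormedAddCommGroup H] [InnerProductSpace 𝕜 H] {m n : ℕ}

theorem orthonormal_toLp_cols_iff {ι κ : Type*} [DecidableEq ι] [Fintype κ] {U : κ → ι → H} :
    Orthonormal 𝕜 (fun s => WithLp.toLp 2 fun i => U i s : ι → PiLp 2 fun _ : κ => H) ↔
      ∀ s t, ∑ i, ⟪U i t, U i s⟫_𝕜 = if s = t then 1 else 0 := by
  rw [orthonormal_iff_ite, forall_comm]
  simp [PiLp.inner_apply, eq_comm]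

theorem Matrix.orthonormal_toLp_cols_iff_conjTranspose_mul_self {ι κ : Type*} [Fintype ι]
    [DecidableEq ι] [Fintype κ]
    {V : Matrix κ ι 𝕜} :
    Orthonormal 𝕜 (fun s => WithLp.toLp 2 fun j => V j s : ι → EuclideanSpace 𝕜 κ) ↔
      Vᴴ * V = 1 := by
  rw [orthonormal_toLp_cols_iff (U := V), ← Matrix.ext_iff, forall_comm]
  refine forall₂_congr fun s t => ?_
  simp only [RCLike.inner_apply, Matrix.mul_apply, Matrix.conjTranspose_apply, RCLike.star_def,
    Matrix.one_apply, mul_comm, eq_comm (a := s)]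

noncomputable def bochnerMap (A : Fin m → Fin n → H) :
    EuclideanSpace 𝕜 (Fin n) →ₗ[𝕜] PiLp 2 (fun _ : Fin m => H) :=
  (WithLp.linearEquiv 2 𝕜 (Fin m → H)).symm.toLinearMap ∘ₗ bmul A ∘ₗ
    (WithLp.linearEquiv 2 𝕜 (Fin n → 𝕜)).toLinearMap

theorem bochnerMap_apply (A : Fin m → Fin n → H) (x : EuclideanSpace 𝕜 (Fin n)) (i : Fin m) :
    bochnerMap A x i = ∑ j, x j • A i j := rfl

theorem finrank_range_bochnerMap (A : Fin m → Fin n → H) :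
    finrank 𝕜 (LinearMap.range (bochnerMap (𝕜 := 𝕜) A)) = crank 𝕜 A := by
  rw [bochnerMap, LinearMap.range_comp,
    LinearMap.range_comp_of_range_eq_top _ (LinearEquiv.range _), LinearEquiv.finrank_map_eq, crank]

theorem bochnerMap_eq_sum_iff {ι : Type*} [Fintype ι] (A : Fin m → Fin n → H) (σ : ι → ℝ)
    (U : Fin m → ι → H) (V : Matrix (Fin n) ι 𝕜) :
    (∀ x, bochnerMap A x = ∑ s, ((σ s : 𝕜) * ⟪WithLp.toLp 2 fun j => V j s, x⟫_𝕜) •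
        WithLp.toLp 2 fun i => U i s) ↔
      ∀ i j, A i j = ∑ s, ((σ s : 𝕜) * starRingEnd 𝕜 (V j s)) • U i s := by
  constructor
  · intro h i j
    simpa [bochnerMap_apply, EuclideanSpace.inner_single_right, PiLp.single_apply] using
      congrArg (· i) (h (EuclideanSpace.single j 1))
  · intro h x
    ext i
    simp only [bochnerMap_apply, h, PiLp.inner_apply, WithLp.ofLp_sum, Finset.sum_apply,
      WithLp.ofLp_smul, Pi.smul_apply, Finset.smul_sum, Finset.mul_sum, Finset.sum_smul, smul_smul,
      RCLike.inner_apply]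
    rw [Finset.sum_comm]
    refine Finset.sum_congr rfl fun s _ => Finset.sum_congr rfl fun j _ => ?_
    congr 1
    ring

theorem isSVD_bochnerMap_iff {r : ℕ} {A : Fin m → Fin n → H} {σ : Fin r → ℝ}
    {U : Fin m → Fin r → H} {V : Matrix (Fin n) (Fin r) 𝕜} :
    (bochnerMap A).IsSVD σ (fun s => WithLp.toLp 2 fun i => U i s)
        (fun s => WithLp.toLp 2 fun j => V j s) ↔
      (∀ s t, ∑ i, ⟪U i t, U i s⟫_𝕜 = if s = t then 1 else 0) ∧ Vᴴ * V = 1 ∧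
        ∀ i j, A i j = ∑ s, ((σ s : 𝕜) * starRingEnd 𝕜 (V j s)) • U i s := by
  rw [← orthonormal_toLp_cols_iff, ← Matrix.orthonormal_toLp_cols_iff_conjTranspose_mul_self,
    ← bochnerMap_eq_sum_iff]
  exact ⟨fun ⟨hU, hV, hA⟩ => ⟨hU, hV, hA⟩, fun ⟨hU, hV, hA⟩ => ⟨hU, hV, hA⟩⟩

end BochnerMatrix

theorem bochner_svd_general {𝕜 H : Type*} [RCLike 𝕜]
    [NormedAddCommGroup H] [InnerProductSpace 𝕜 H]
    {m n r : ℕ} (A : Fin m → Fin n → H)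
    (hr : crank 𝕜 A = r) :
    ∃! σ : Fin r → ℝ,
      (∀ s t : Fin r, s ≤ t → σ t ≤ σ s) ∧ (∀ s, 0 < σ s) ∧
      ∃ U : Fin m → Fin r → H, ∃ V : Matrix (Fin n) (Fin r) 𝕜,
        (∀ s t : Fin r, (∑ i, inner (𝕜 := 𝕜) (U i t) (U i s)) =
          if s = t then 1 else 0) ∧
        V.conjTranspose * V = 1 ∧
        (∀ i j, A i j = ∑ s, ((σ s : 𝕜) * (starRingEnd 𝕜) (V j s)) • U i s) := by
  obtain ⟨σ, u, v, hσ, hσ₀, hsvd⟩ :=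
    (bochnerMap (𝕜 := 𝕜) A).exists_isSVD (by rw [finrank_range_bochnerMap, hr])
  refine ⟨σ, ⟨fun s t hst => hσ hst, hσ₀, fun i s => u s i, Matrix.of fun j s => v s j,
    isSVD_bochnerMap_iff.1 hsvd⟩, ?_⟩
  rintro σ' ⟨hσ', hσ₀', U', V', hU', hV', hA'⟩
  exact (isSVD_bochnerMap_iff.2 ⟨hU', hV', hA'⟩).eq_of_antitone hsvd (fun s t hst => hσ' s t hst)
    hσ hσ₀' hσ₀

/-- SVD of Bochner matrices: a nonzero `A ∈ H^{m×n}` with column rank `r` has a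
decomposition `A = U Σ V*` with `σ₁ ≥ ⋯ ≥ σ_r > 0`, `U ∈ H^{m×r}` with
orthonormal columns, `V ∈ 𝔽^{n×r}` with orthonormal columns; the singular
values `σ` are uniquely determined. -/
theorem bochner_svd {𝕜 H : Type*} [RCLike 𝕜]
    [NormedAddCommGroup H] [InnerProductSpace 𝕜 H] [CompleteSpace H]
    {m n r : ℕ} (A : Fin m → Fin n → H)
    (hA : A ≠ fun _ _ => 0) (hr : crank 𝕜 A = r) :
    ∃! σ : Fin r → ℝ,
      (∀ s t : Fin r, s ≤ t → σ t ≤ σ s) ∧ (∀ s, 0 < σ s) ∧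
      ∃ U : Fin m → Fin r → H, ∃ V : Matrix (Fin n) (Fin r) 𝕜,
        (∀ s t : Fin r, (∑ i, inner (𝕜 := 𝕜) (U i t) (U i s)) =
          if s = t then 1 else 0) ∧
        V.conjTranspose * V = 1 ∧
        (∀ i j, A i j = ∑ s, ((σ s : 𝕜) * (starRingEnd 𝕜) (V j s)) • U i s) :=
  bochner_svd_general A hr
end

section
/- (Moore–Penrose pseudoinverse for Bochner matrices) For every Bochner matrix A ∈ H^{m×n}, there exists a unique linear operator A† : H^m → 𝔽^n satisfying A A† A = A, A† A A† = A†, (A A†)* = A A†, and (A† A)* = A† A (where adjoints are with respect to the ℓ²(H) inner product on H^m and the standard inner product on 𝔽^n). -/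
/-!
The pseudoinverse of a linear map `T` out of a finite-dimensional inner product space is
`B = (T restricted to (ker T)ᗮ)⁻¹ ∘ P`, where `P` is the orthogonal projection onto `range T`;
then `T B` and `B T` are the orthogonal projections onto `range T` and `(ker T)ᗮ`, which gives
the four Penrose equations. Conversely those equations force `T B` and `B T`, hence `B = B T B`.
A Bochner matrix is such a map `𝔽ⁿ → Hᵐ` once both sides carry their `ℓ²` inner products.
-/

open scoped BigOperators

namespace LinearMap

variable {𝕜 E F : Type*} [RCLike 𝕜] [NormedAddCommGroup E] [InnerProductSpace 𝕜 E]
  [NormedAddCommGroup F] [InnerProductSpace 𝕜 F]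

structure IsMoorePenroseInverse (T : E →ₗ[𝕜] F) (B : F →ₗ[𝕜] E) : Prop where
  apply_inv_apply : ∀ x, T (B (T x)) = T x
  inv_apply_inv : ∀ y, B (T (B y)) = B y
  isSymmetric_comp_inv : (T ∘ₗ B).IsSymmetric
  isSymmetric_inv_comp : (B ∘ₗ T).IsSymmetric

theorem IsMoorePenroseInverse.unique {T : E →ₗ[𝕜] F} {B C : F →ₗ[𝕜] E}
    (hB : IsMoorePenroseInverse T B) (hC : IsMoorePenroseInverse T C) : B = C := by
  have hTB : ∀ y, T (B y) = T (C y) := fun y => ext_inner_right 𝕜 fun z => calc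
    inner 𝕜 (T (B y)) z = inner 𝕜 y (T (B z)) := hB.isSymmetric_comp_inv y z
    _ = inner 𝕜 y (T (C (T (B z)))) := by rw [hC.apply_inv_apply]
    _ = inner 𝕜 (T (C y)) (T (B z)) := (hC.isSymmetric_comp_inv y _).symm
    _ = inner 𝕜 (T (B (T (C y)))) z := (hB.isSymmetric_comp_inv _ z).symm
    _ = inner 𝕜 (T (C y)) z := by rw [hB.apply_inv_apply]
  have hBT : ∀ x, B (T x) = C (T x) := fun x => ext_inner_right 𝕜 fun w => calc
    inner 𝕜 (B (T x)) w = inner 𝕜 x (B (T w)) := hB.isSymmetric_inv_comp x w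
    _ = inner 𝕜 x (B (T (C (T w)))) := by rw [hC.apply_inv_apply]
    _ = inner 𝕜 (B (T x)) (C (T w)) := (hB.isSymmetric_inv_comp x _).symm
    _ = inner 𝕜 (C (T (B (T x)))) w := (hC.isSymmetric_inv_comp _ w).symm
    _ = inner 𝕜 (C (T x)) w := by rw [hB.apply_inv_apply]
  ext y
  calc B y = B (T (B y)) := (hB.inv_apply_inv y).symm
    _ = C (T (C y)) := by rw [hTB, hBT]
    _ = C y := hC.inv_apply_inv y

section FiniteDimensional

variable [FiniteDimensional 𝕜 E] (T : E →ₗ[𝕜] F)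

theorem apply_starProjection_orthogonal_ker (x : E) : T ((ker T)ᗮ.starProjection x) = T x := by
  have hx : x - (ker T)ᗮ.starProjection x ∈ ker T := by
    simpa only [Submodule.orthogonal_orthogonal] using (ker T)ᗮ.sub_starProjection_mem_orthogonal x
  rw [mem_ker, map_sub, sub_eq_zero] at hx
  exact hx.symm

noncomputable def orthogonalKerEquivRange : (ker T)ᗮ ≃ₗ[𝕜] range T :=
  .ofBijective ((T.domRestrict _).codRestrict _ fun k => mem_range_self T k) <| by
    refine ⟨(injective_iff_map_eq_zero _).mpr fun k hk => ?_, ?_⟩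
    · have hkT : (k : E) ∈ ker T := congrArg Subtype.val hk
      exact Subtype.ext <| Submodule.disjoint_def.mp (ker T).orthogonal_disjoint _ hkT k.2
    · rintro ⟨_, x, rfl⟩
      exact ⟨(ker T)ᗮ.orthogonalProjectionOnto x,
        Subtype.ext (apply_starProjection_orthogonal_ker T x)⟩

noncomputable def moorePenroseInverse : F →ₗ[𝕜] E :=
  (ker T)ᗮ.subtype ∘ₗ (orthogonalKerEquivRange T).symm.toLinearMap ∘ₗ
    (range T).orthogonalProjectionOnto.toLinearMap

theorem apply_moorePenroseInverse (y : F) :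
    T (moorePenroseInverse T y) = (range T).starProjection y :=
  congrArg Subtype.val
    ((orthogonalKerEquivRange T).apply_symm_apply ((range T).orthogonalProjectionOnto y))

theorem moorePenroseInverse_apply (x : E) :
    moorePenroseInverse T (T x) = (ker T)ᗮ.starProjection x := by
  have hP : (range T).orthogonalProjectionOnto (T x) = ⟨T x, mem_range_self T x⟩ :=
    (range T).orthogonalProjectionOnto_mem_subspace_eq_self ⟨T x, mem_range_self T x⟩
  have he : (orthogonalKerEquivRange T).symm ⟨T x, mem_range_self T x⟩ =
      (ker T)ᗮ.orthogonalProjectionOnto x :=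
    (LinearEquiv.symm_apply_eq _).mpr <| Subtype.ext (apply_starProjection_orthogonal_ker T x).symm
  simp only [moorePenroseInverse, comp_apply, ContinuousLinearMap.coe_coe, LinearEquiv.coe_coe,
    hP, he, Submodule.subtype_apply, Submodule.starProjection_apply]

theorem moorePenroseInverse_starProjection_range (y : F) :
    moorePenroseInverse T ((range T).starProjection y) = moorePenroseInverse T y := by
  simp only [moorePenroseInverse, comp_apply, ContinuousLinearMap.coe_coe,
    Submodule.starProjection_apply, Submodule.orthogonalProjectionOnto_mem_subspace_eq_self]

theorem isMoorePenroseInverse_moorePenroseInverse :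
    IsMoorePenroseInverse T (moorePenroseInverse T) where
  apply_inv_apply x := by rw [moorePenroseInverse_apply, apply_starProjection_orthogonal_ker]
  inv_apply_inv y := by rw [apply_moorePenroseInverse, moorePenroseInverse_starProjection_range]
  isSymmetric_comp_inv y z := by
    simpa only [comp_apply, ContinuousLinearMap.coe_coe, apply_moorePenroseInverse] using
      (range T).starProjection_isSymmetric y z
  isSymmetric_inv_comp x w := by
    simpa only [comp_apply, ContinuousLinearMap.coe_coe, moorePenroseInverse_apply] using
      (ker T)ᗮ.starProjection_isSymmetric x w

theorem existsUnique_isMoorePenroseInverse : ∃! B, IsMoorePenroseInverse T B :=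
  ⟨_, isMoorePenroseInverse_moorePenroseInverse T, fun _ hB =>
    hB.unique (isMoorePenroseInverse_moorePenroseInverse T)⟩

end FiniteDimensional

end LinearMap

theorem bochner_moore_penrose_general {𝕜 H : Type*} [RCLike 𝕜]
    [NormedAddCommGroup H] [InnerProductSpace 𝕜 H]
    {m n : ℕ} (A : Fin m → Fin n → H) :
    ∃! B : (Fin m → H) →ₗ[𝕜] (Fin n → 𝕜),
      (∀ x : Fin n → 𝕜, bmul (𝕜 := 𝕜) A (B (bmul (𝕜 := 𝕜) A x)) = bmul (𝕜 := 𝕜) A x) ∧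
      (∀ y : Fin m → H, B (bmul (𝕜 := 𝕜) A (B y)) = B y) ∧
      (∀ y z : Fin m → H,
        (∑ i, inner (𝕜 := 𝕜) (bmul (𝕜 := 𝕜) A (B y) i) (z i)) =
          ∑ i, inner (𝕜 := 𝕜) (y i) (bmul (𝕜 := 𝕜) A (B z) i)) ∧
      (∀ x y : Fin n → 𝕜,
        (∑ j, (starRingEnd 𝕜) (B (bmul (𝕜 := 𝕜) A x) j) * y j) =
          ∑ j, (starRingEnd 𝕜) (x j) * B (bmul (𝕜 := 𝕜) A y) j) := by
  let eE := WithLp.linearEquiv 2 𝕜 (Fin n → 𝕜)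
  let eF := WithLp.linearEquiv 2 𝕜 (Fin m → H)
  refine (LinearEquiv.arrowCongr eF.symm eE.symm).toEquiv.existsUnique_congr (fun B => ?_) |>.mpr
    (LinearEquiv.arrowCongr eE.symm eF.symm (bmul A)).existsUnique_isMoorePenroseInverse
  have inner_toLp : ∀ x y : Fin n → 𝕜,
      inner 𝕜 (WithLp.toLp 2 x) (WithLp.toLp 2 y) = ∑ j, (starRingEnd 𝕜) (x j) * y j := by
    simp only [PiLp.inner_apply, RCLike.inner_apply', implies_true]
  constructor
  · rintro ⟨h1, h2, h3, h4⟩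
    exact ⟨fun x => congrArg (WithLp.toLp 2) (h1 x.ofLp),
      fun y => congrArg (WithLp.toLp 2) (h2 y.ofLp), fun y z => h3 y.ofLp z.ofLp,
      fun x y => (inner_toLp _ _).trans <| (h4 x.ofLp y.ofLp).trans (inner_toLp _ _).symm⟩
  · rintro ⟨h1, h2, h3, h4⟩
    exact ⟨fun x => congrArg WithLp.ofLp (h1 (WithLp.toLp 2 x)),
      fun y => congrArg WithLp.ofLp (h2 (WithLp.toLp 2 y)),
      fun y z => h3 (WithLp.toLp 2 y) (WithLp.toLp 2 z),
      fun x y => (inner_toLp _ _).symm.trans <| (h4 _ _).trans (inner_toLp _ _)⟩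

/-- Moore–Penrose pseudoinverse for Bochner matrices: for every `A ∈ H^{m×n}`
there is a unique linear operator `B = A† : H^m → 𝔽^n` with `A B A = A`,
`B A B = B`, and both `A B` and `B A` self-adjoint (for the `ℓ²(H)` inner
product on `H^m` and the standard inner product on `𝔽^n`). -/
theorem bochner_moore_penrose {𝕜 H : Type*} [RCLike 𝕜]
    [NormedAddCommGroup H] [InnerProductSpace 𝕜 H] [CompleteSpace H]
    {m n : ℕ} (A : Fin m → Fin n → H) :
    ∃! B : (Fin m → H) →ₗ[𝕜] (Fin n → 𝕜),
      (∀ x : Fin n → 𝕜, bmul (𝕜 := 𝕜) A (B (bmul (𝕜 := 𝕜) A x)) = bmul (𝕜 := 𝕜) A x) ∧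
      (∀ y : Fin m → H, B (bmul (𝕜 := 𝕜) A (B y)) = B y) ∧
      (∀ y z : Fin m → H,
        (∑ i, inner (𝕜 := 𝕜) (bmul (𝕜 := 𝕜) A (B y) i) (z i)) =
          ∑ i, inner (𝕜 := 𝕜) (y i) (bmul (𝕜 := 𝕜) A (B z) i)) ∧
      (∀ x y : Fin n → 𝕜,
        (∑ j, (starRingEnd 𝕜) (B (bmul (𝕜 := 𝕜) A x) j) * y j) =
          ∑ j, (starRingEnd 𝕜) (x j) * B (bmul (𝕜 := 𝕜) A y) j) :=
  bochner_moore_penrose_general A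
end

section
/- (Least squares via pseudoinverse) Let A ∈ H^{m×n} be a Bochner matrix and B ∈ H^{m×k}. Then min over X ∈ 𝔽^{n×k} of ‖A·X − B‖_{ℓ²(H)} is attained at X = A†B, and equals ‖(I − A A†)B‖_{ℓ²(H)}, where A† is the Moore–Penrose pseudoinverse and A A† is the orthogonal projection onto the column space of A. -/
open scoped BigOperators

lemma key_ls {𝕜 H : Type*} [RCLike 𝕜] [NormedAddCommGroup H] [InnerProductSpace 𝕜 H]
    {m n : ℕ} (A : Fin m → Fin n → H)
    (pinv : (Fin m → H) →ₗ[𝕜] (Fin n → 𝕜))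
    (h1 : ∀ x : Fin n → 𝕜,
      bmul (𝕜 := 𝕜) A (pinv (bmul (𝕜 := 𝕜) A x)) = bmul (𝕜 := 𝕜) A x)
    (h2 : ∀ y : Fin m → H, pinv (bmul (𝕜 := 𝕜) A (pinv y)) = pinv y)
    (h3 : ∀ y z : Fin m → H,
      (∑ i, inner (𝕜 := 𝕜) (bmul (𝕜 := 𝕜) A (pinv y) i) (z i)) =
        ∑ i, inner (𝕜 := 𝕜) (y i) (bmul (𝕜 := 𝕜) A (pinv z) i))
    (x : Fin n → 𝕜) (b : Fin m → H) :
    ∑ i, ‖b i - bmul (𝕜 := 𝕜) A (pinv b) i‖ ^ 2 ≤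
      ∑ i, ‖bmul (𝕜 := 𝕜) A x i - b i‖ ^ 2 := by
  set u : Fin m → H := fun i => bmul (𝕜 := 𝕜) A x i - bmul (𝕜 := 𝕜) A (pinv b) i with hu_def
  set v : Fin m → H := fun i => bmul (𝕜 := 𝕜) A (pinv b) i - b i with hv_def
  have horth : (∑ i, inner (𝕜 := 𝕜) (u i) (v i)) = 0 := by
    have hu : ∀ i, u i = bmul (𝕜 := 𝕜) A (pinv (bmul (𝕜 := 𝕜) A (x - pinv b))) i := by
      intro i
      rw [h1, map_sub]
      simp [hu_def]
    have hv : pinv v = 0 := by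
      have hveq : v = bmul (𝕜 := 𝕜) A (pinv b) - b := rfl
      rw [hveq, map_sub, h2, sub_self]
    calc ∑ i, inner (𝕜 := 𝕜) (u i) (v i)
        = ∑ i, inner (𝕜 := 𝕜)
            (bmul (𝕜 := 𝕜) A (pinv (bmul (𝕜 := 𝕜) A (x - pinv b))) i) (v i) := by
          exact Finset.sum_congr rfl fun i _ => by rw [← hu]
      _ = ∑ i, inner (𝕜 := 𝕜) ((bmul (𝕜 := 𝕜) A (x - pinv b)) i)
            (bmul (𝕜 := 𝕜) A (pinv v) i) := h3 _ _
      _ = 0 := by rw [hv]; simp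
  have hsum : ∀ i, bmul (𝕜 := 𝕜) A x i - b i = u i + v i := by
    intro i; simp [hu_def, hv_def]
  calc ∑ i, ‖b i - bmul (𝕜 := 𝕜) A (pinv b) i‖ ^ 2
      = ∑ i, ‖v i‖ ^ 2 := by
        exact Finset.sum_congr rfl fun i _ => by rw [norm_sub_rev]
    _ ≤ ∑ i, ‖u i‖ ^ 2 + ∑ i, ‖v i‖ ^ 2 := by
        have : (0:ℝ) ≤ ∑ i, ‖u i‖ ^ 2 :=
          Finset.sum_nonneg fun i _ => by positivity
        linarith
    _ = ∑ i, ‖bmul (𝕜 := 𝕜) A x i - b i‖ ^ 2 := by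
        have expand : ∀ i : Fin m, ‖u i + v i‖ ^ 2 =
            ‖u i‖ ^ 2 + 2 * RCLike.re (inner (𝕜 := 𝕜) (u i) (v i)) + ‖v i‖ ^ 2 :=
          fun i => norm_add_sq (𝕜 := 𝕜) _ _
        have : ∑ i, ‖bmul (𝕜 := 𝕜) A x i - b i‖ ^ 2 =
            ∑ i, (‖u i‖ ^ 2 + 2 * RCLike.re (inner (𝕜 := 𝕜) (u i) (v i)) + ‖v i‖ ^ 2) := by
          exact Finset.sum_congr rfl fun i _ => by rw [hsum i, expand i]
        rw [this, Finset.sum_add_distrib, Finset.sum_add_distrib, ← Finset.mul_sum,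
          ← map_sum, horth]
        simp

/-- Least squares via the pseudoinverse: for a Bochner matrix `A ∈ H^{m×n}` and
`B ∈ H^{m×k}`, the minimum of `‖A·X − B‖_{ℓ²(H)}` over `X ∈ 𝔽^{n×k}` is attained
at `X = A†B` (the pseudoinverse applied columnwise), and equals
`‖(I − A A†)B‖_{ℓ²(H)}`. -/
theorem bochner_least_squares {𝕜 H : Type*} [RCLike 𝕜]
    [NormedAddCommGroup H] [InnerProductSpace 𝕜 H] [CompleteSpace H]
    {m n k : ℕ} (A : Fin m → Fin n → H) (B : Fin m → Fin k → H)
    (pinv : (Fin m → H) →ₗ[𝕜] (Fin n → 𝕜))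
    (h1 : ∀ x : Fin n → 𝕜,
      bmul (𝕜 := 𝕜) A (pinv (bmul (𝕜 := 𝕜) A x)) = bmul (𝕜 := 𝕜) A x)
    (h2 : ∀ y : Fin m → H, pinv (bmul (𝕜 := 𝕜) A (pinv y)) = pinv y)
    (h3 : ∀ y z : Fin m → H,
      (∑ i, inner (𝕜 := 𝕜) (bmul (𝕜 := 𝕜) A (pinv y) i) (z i)) =
        ∑ i, inner (𝕜 := 𝕜) (y i) (bmul (𝕜 := 𝕜) A (pinv z) i))
    (h4 : ∀ x y : Fin n → 𝕜,
      (∑ j, (starRingEnd 𝕜) (pinv (bmul (𝕜 := 𝕜) A x) j) * y j) =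
        ∑ j, (starRingEnd 𝕜) (x j) * pinv (bmul (𝕜 := 𝕜) A y) j) :
    IsLeast
      {c : ℝ | ∃ X : Fin n → Fin k → 𝕜,
        c = Real.sqrt (∑ i, ∑ t, ‖(∑ j, X j t • A i j) - B i t‖ ^ 2)}
      (Real.sqrt (∑ i, ∑ t,
        ‖B i t - bmul (𝕜 := 𝕜) A (pinv (fun i' => B i' t)) i‖ ^ 2)) := by
  constructor
  · refine ⟨fun j t => pinv (fun i' => B i' t) j, ?_⟩
    congr 1
    refine Finset.sum_congr rfl fun i _ => Finset.sum_congr rfl fun t _ => ?_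
    rw [norm_sub_rev]
    rfl
  · rintro c ⟨X, rfl⟩
    apply Real.sqrt_le_sqrt
    rw [Finset.sum_comm]
    rw [show (∑ i, ∑ t, ‖(∑ j, X j t • A i j) - B i t‖ ^ 2)
        = ∑ t, ∑ i, ‖(∑ j, X j t • A i j) - B i t‖ ^ 2 from Finset.sum_comm]
    refine Finset.sum_le_sum fun t _ => ?_
    exact key_ls A pinv h1 h2 h3 (fun j => X j t) (fun i' => B i' t)
end

section
/- Let A ∈ H^{m×n} be a Bochner matrix, J ⊆ [n], C = A(:,J) the submatrix of columns indexed by J, and C† its Moore–Penrose pseudoinverse. Then A = C·(C†A) holds if and only if rank_c(C) = rank_c(A). -/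
open scoped BigOperators

/-- For a Bochner matrix `A ∈ H^{m×n}` and a column subset `J`, with `C = A(:,J)`
and `C†` its Moore–Penrose pseudoinverse: `A = C·(C†A)` holds iff
`rank_c C = rank_c A`. -/
theorem bochner_cur_column_iff {𝕜 H : Type*} [RCLike 𝕜]
    [NormedAddCommGroup H] [InnerProductSpace 𝕜 H] [CompleteSpace H]
    {m n : ℕ} (A : Fin m → Fin n → H) (J : Finset (Fin n))
    (C : Fin m → ↥J → H) (hC : ∀ i (s : J), C i s = A i (s : Fin n))
    (pC : (Fin m → H) →ₗ[𝕜] (↥J → 𝕜))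
    (h1 : ∀ x : ↥J → 𝕜,
      bmul (𝕜 := 𝕜) C (pC (bmul (𝕜 := 𝕜) C x)) = bmul (𝕜 := 𝕜) C x)
    (h2 : ∀ y : Fin m → H, pC (bmul (𝕜 := 𝕜) C (pC y)) = pC y)
    (h3 : ∀ y z : Fin m → H,
      (∑ i, inner (𝕜 := 𝕜) (bmul (𝕜 := 𝕜) C (pC y) i) (z i)) =
        ∑ i, inner (𝕜 := 𝕜) (y i) (bmul (𝕜 := 𝕜) C (pC z) i))
    (h4 : ∀ x y : ↥J → 𝕜,
      (∑ s, (starRingEnd 𝕜) (pC (bmul (𝕜 := 𝕜) C x) s) * y s) =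
        ∑ s, (starRingEnd 𝕜) (x s) * pC (bmul (𝕜 := 𝕜) C y) s) :
    (∀ i j, (∑ s : J, (pC (fun i' => A i' j)) s • C i s) = A i j) ↔
      crank 𝕜 C = crank 𝕜 A := by
  classical
  set T := bmul (𝕜 := 𝕜) C with hT
  set S := bmul (𝕜 := 𝕜) A with hS
  have hTapp : ∀ (x : ↥J → 𝕜) i, T x i = ∑ s : J, x s • C i s := fun x i => rfl
  have hSapp : ∀ (x : Fin n → 𝕜) i, S x i = ∑ j, x j • A i j := fun x i => rfl
  -- range of C is contained in range of A
  have hle : LinearMap.range T ≤ LinearMap.range S := by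
    rintro y ⟨x, rfl⟩
    refine ⟨fun j => if h : j ∈ J then x ⟨j, h⟩ else 0, ?_⟩
    funext i
    rw [hSapp, hTapp]
    rw [← Finset.sum_subset (Finset.subset_univ J)
      (by intro j _ hj; simp [hj])]
    rw [← Finset.sum_coe_sort J (fun j => (if h : j ∈ J then x ⟨j, h⟩ else 0) • A i j)]
    refine Finset.sum_congr rfl fun s _ => ?_
    rw [dif_pos s.2, hC i s]
  constructor
  · intro hL
    have hcol : ∀ j, (fun i => A i j) ∈ LinearMap.range T := fun j =>
      ⟨pC (fun i' => A i' j), funext fun i => hL i j⟩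
    have hle2 : LinearMap.range S ≤ LinearMap.range T := by
      rintro y ⟨x, rfl⟩
      have : S x = ∑ j, x j • (fun i => A i j) := by
        funext i
        simp [hSapp]
      rw [this]
      exact Submodule.sum_mem _ fun j _ => Submodule.smul_mem _ _ (hcol j)
    have : LinearMap.range T = LinearMap.range S := le_antisymm hle hle2
    unfold crank
    rw [← hT, ← hS, this]
  · intro hrk
    have heq : LinearMap.range T = LinearMap.range S :=
      Submodule.eq_of_le_of_finrank_eq hle hrk
    intro i j
    have hcol : (fun i' => A i' j) ∈ LinearMap.range T := by
      rw [heq]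
      exact ⟨Pi.single j 1, funext fun i' => by
        rw [hSapp]; simp [Pi.single_apply, ite_smul]⟩
    obtain ⟨x, hx⟩ := hcol
    have h := h1 x
    rw [hx] at h
    have := congrFun h i
    rw [hTapp] at this
    exact this
end

section
/- (Eckart–Young–Mirsky for Bochner matrices, Frobenius-type norm) Let A ∈ H^{m×n} be a nonzero Bochner matrix with singular values σ₁ ≥ σ₂ ≥ ⋯ ≥ σ_r > 0 (r = rank_c A), and let 1 ≤ κ ≤ r. Then min over Bochner matrices B ∈ H^{m×n} with rank_c(B) ≤ κ of ‖A − B‖_{ℓ²(H)} equals (σ_{κ+1}² + ⋯ + σ_r²)^{1/2}, and the minimum is attained by the κ-truncated SVD of A. -/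
open scoped BigOperators

/-!
In `ℓ²(Fin m; H)` the columns of `A` are `a_j = ∑ₛ conj (V j s) σₛ uₛ`, with `uₛ` the orthonormal
columns of `U`. Since `V` has orthonormal columns, `∑ⱼ ‖∑ₛ conj (V j s) gₛ‖² = ∑ₛ ‖gₛ‖²` for any
vectors `gₛ`; this gives the error of the truncated SVD at once. If the columns of `B` lie in a
subspace `W` with `dim W ≤ κ`, then, with `P` the orthogonal projection onto `W` and
`τₛ = ‖P uₛ‖²`, `∑ⱼ ‖a_j - b_j‖² ≥ ∑ⱼ ‖(1 - P) a_j‖² = ∑ₛ σₛ² (1 - τₛ)`. Here `0 ≤ τₛ ≤ 1` and,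
by Bessel's inequality in an orthonormal basis of `W`, `∑ₛ τₛ ≤ dim W ≤ κ`; for decreasing `σ`
such a sum is smallest when `τ` is the indicator of the first `κ` indices.
-/

open Finset Module Submodule

theorem sum_compl_le_sum_mul_one_sub {ι : Type*} [Fintype ι] [DecidableEq ι] (S : Finset ι)
    {w τ : ι → ℝ} {c : ℝ} (hc : 0 ≤ c) (hS : ∀ s ∈ S, c ≤ w s) (hSc : ∀ s ∉ S, w s ≤ c)
    (hτ0 : ∀ s, 0 ≤ τ s) (hτ1 : ∀ s, τ s ≤ 1) (hτ : ∑ s, τ s ≤ #S) :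
    ∑ s ∈ Sᶜ, w s ≤ ∑ s, w s * (1 - τ s) := by
  have hin : ∑ s ∈ S, c * (1 - τ s) ≤ ∑ s ∈ S, w s * (1 - τ s) :=
    sum_le_sum fun s hs => mul_le_mul_of_nonneg_right (hS s hs) (by linarith [hτ1 s])
  have hout : ∑ s ∈ Sᶜ, (w s - c * τ s) ≤ ∑ s ∈ Sᶜ, w s * (1 - τ s) :=
    sum_le_sum fun s hs => by nlinarith [hSc s (mem_compl.1 hs), hτ0 s]
  have hsplit : ∑ s ∈ S, c * (1 - τ s) + ∑ s ∈ Sᶜ, (w s - c * τ s)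
      = ∑ s ∈ Sᶜ, w s + c * (#S - ∑ s, τ s) := by
    simp only [mul_sub, sum_sub_distrib, ← mul_sum, mul_one, sum_const, nsmul_eq_mul]
    rw [← sum_add_sum_compl S τ]
    ring
  rw [← sum_add_sum_compl S]
  nlinarith [mul_nonneg hc (sub_nonneg.2 hτ)]

theorem Antitone.sum_ite_le_sum_mul_one_sub {r κ : ℕ} {w τ : Fin r → ℝ} (hw : Antitone w)
    (hw0 : ∀ s, 0 ≤ w s) (hτ0 : ∀ s, 0 ≤ τ s) (hτ1 : ∀ s, τ s ≤ 1) (hτ : ∑ s, τ s ≤ κ) :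
    ∑ s : Fin r, (if κ ≤ (s : ℕ) then w s else 0) ≤ ∑ s, w s * (1 - τ s) := by
  rcases lt_or_ge κ r with hκ | hκ
  · let S : Finset (Fin r) := {s | (s : ℕ) < κ}
    have hcard : #S = κ := by simp [S, Fin.card_filter_val_lt, hκ.le]
    have hcompl : ∑ s ∈ Sᶜ, w s = ∑ s : Fin r, if κ ≤ (s : ℕ) then w s else 0 := by
      rw [← sum_filter]
      congr 1
      ext s
      simp [S]
    rw [← hcompl]
    refine sum_compl_le_sum_mul_one_sub S (hw0 ⟨κ, hκ⟩) (fun s hs => hw ?_) (fun s hs => hw ?_)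
      hτ0 hτ1 (by rwa [hcard])
    · simpa [S, Fin.le_def] using (mem_filter.1 hs).2.le
    · simpa [S, Fin.le_def] using hs
  · have hzero : ∀ s : Fin r, ¬ κ ≤ (s : ℕ) := fun s => by omega
    simp only [hzero, if_false, sum_const_zero]
    exact sum_nonneg fun s _ => mul_nonneg (hw0 s) (by linarith [hτ1 s])

theorem sum_smul_ite_mem_span_image {R M κ : Type*} [Semiring R] [AddCommMonoid M] [Module R M]
    [Fintype κ] (p : κ → Prop) [DecidablePred p] (c : κ → R) (v : κ → M) :
    ∑ s, c s • (if p s then v s else 0) ∈ span R (v '' ({s | p s} : Finset κ)) := by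
  refine sum_mem fun s _ => smul_mem _ _ ?_
  split_ifs with hs
  · exact subset_span ⟨s, by simpa using hs, rfl⟩
  · exact zero_mem _

section InnerProductSpace

variable {𝕜 E : Type*} [RCLike 𝕜] [NormedAddCommGroup E] [InnerProductSpace 𝕜 E]

theorem sum_norm_sq_sum_conj_smul {ι κ : Type*} [Fintype ι] [Fintype κ] [DecidableEq κ]
    {V : Matrix ι κ 𝕜} (hV : V.conjTranspose * V = 1) (g : κ → E) :
    ∑ j, ‖∑ s, starRingEnd 𝕜 (V j s) • g s‖ ^ 2 = ∑ s, ‖g s‖ ^ 2 := by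
  have hcol : ∀ s t, ∑ j, V j s * starRingEnd 𝕜 (V j t) = (1 : Matrix κ κ 𝕜) t s := by
    intro s t
    rw [← hV, Matrix.mul_apply]
    simp [mul_comm]
  simp_rw [norm_sq_eq_re_inner (𝕜 := 𝕜), ← map_sum, sum_inner, inner_sum, inner_smul_left,
    inner_smul_right, RCLike.conj_conj]
  congr 1
  calc ∑ j, ∑ s, ∑ t, V j s * (starRingEnd 𝕜 (V j t) * inner 𝕜 (g s) (g t))
      = ∑ s, ∑ t, (∑ j, V j s * starRingEnd 𝕜 (V j t)) * inner 𝕜 (g s) (g t) := by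
        simp_rw [sum_mul, mul_assoc]
        rw [sum_comm]
        exact sum_congr rfl fun s _ => sum_comm
    _ = ∑ s, inner 𝕜 (g s) (g s) := by simp [hcol, Matrix.one_apply]

theorem sum_norm_sq_sum_conj_smul_sub_truncation {ι : Type*} [Fintype ι] {r κ : ℕ}
    (σ : Fin r → ℝ) {u : Fin r → E} (hu : Orthonormal 𝕜 u) {V : Matrix ι (Fin r) 𝕜}
    (hV : V.conjTranspose * V = 1) :
    ∑ j, ‖∑ s, starRingEnd 𝕜 (V j s) • (σ s : 𝕜) • u s -
        ∑ s, starRingEnd 𝕜 (V j s) • (if (s : ℕ) < κ then (σ s : 𝕜) • u s else 0)‖ ^ 2 =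
      ∑ s : Fin r, if κ ≤ (s : ℕ) then σ s ^ 2 else 0 := by
  simp only [← sum_sub_distrib, ← smul_sub]
  rw [sum_norm_sq_sum_conj_smul hV]
  refine sum_congr rfl fun s _ => ?_
  by_cases hs : (s : ℕ) < κ
  · simp [hs, not_le.2 hs]
  · simp [hs, not_lt.1 hs, norm_smul, hu.1 s]

theorem Orthonormal.sum_norm_sq_starProjection_le_finrank {ι : Type*} [Fintype ι] {u : ι → E}
    (hu : Orthonormal 𝕜 u) (W : Submodule 𝕜 E) [FiniteDimensional 𝕜 W] :
    ∑ s, ‖W.starProjection (u s)‖ ^ 2 ≤ finrank 𝕜 W := by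
  let w := stdOrthonormalBasis 𝕜 W
  calc ∑ s, ‖W.starProjection (u s)‖ ^ 2 = ∑ k, ∑ s, ‖inner 𝕜 (u s) (w k : E)‖ ^ 2 := by
        rw [sum_comm]
        refine sum_congr rfl fun s _ => ?_
        rw [starProjection_apply, norm_coe, ← w.sum_sq_norm_inner_right]
        refine sum_congr rfl fun k _ => ?_
        rw [inner_orthogonalProjectionOnto_eq_of_mem_left, ← inner_conj_symm, RCLike.norm_conj]
    _ ≤ ∑ _k : Fin (finrank 𝕜 W), 1 := sum_le_sum fun k _ => by
        simpa [norm_coe, w.orthonormal.1 k] using hu.sum_inner_products_le (w k : E) (s := univ)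
    _ = finrank 𝕜 W := by simp

theorem Submodule.norm_sub_starProjection_le {W : Submodule 𝕜 E} [W.HasOrthogonalProjection]
    (y : E) {w : E} (hw : w ∈ W) : ‖y - W.starProjection y‖ ≤ ‖y - w‖ := by
  rw [starProjection_minimal]
  exact ciInf_le ⟨0, Set.forall_mem_range.mpr fun _ => norm_nonneg _⟩ (⟨w, hw⟩ : W)

theorem sum_ite_sq_le_sum_norm_sq_sub_of_finrank_le {ι : Type*} [Fintype ι] {r κ : ℕ}
    {σ : Fin r → ℝ} (hσ : Antitone σ) (hσ0 : ∀ s, 0 ≤ σ s) {u : Fin r → E}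
    (hu : Orthonormal 𝕜 u) {V : Matrix ι (Fin r) 𝕜} (hV : V.conjTranspose * V = 1)
    {W : Submodule 𝕜 E} [FiniteDimensional 𝕜 W] (hW : finrank 𝕜 W ≤ κ) {b : ι → E}
    (hb : ∀ j, b j ∈ W) :
    ∑ s : Fin r, (if κ ≤ (s : ℕ) then σ s ^ 2 else 0) ≤
      ∑ j, ‖∑ s, starRingEnd 𝕜 (V j s) • (σ s : 𝕜) • u s - b j‖ ^ 2 := by
  let τ s := ‖W.starProjection (u s)‖ ^ 2
  have hpyth : ∀ s, ‖Wᗮ.starProjection (u s)‖ ^ 2 = 1 - τ s := fun s => by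
    rw [eq_sub_iff_add_eq', ← W.norm_sq_eq_add_norm_sq_starProjection, hu.1 s, one_pow]
  have hσ2 : Antitone fun s => σ s ^ 2 := fun s t hst => pow_le_pow_left₀ (hσ0 t) (hσ hst) 2
  calc ∑ s : Fin r, (if κ ≤ (s : ℕ) then σ s ^ 2 else 0)
      ≤ ∑ s, σ s ^ 2 * (1 - τ s) :=
        hσ2.sum_ite_le_sum_mul_one_sub (fun s => sq_nonneg _) (fun s => sq_nonneg _)
          (fun s => by linarith [hpyth s, sq_nonneg ‖Wᗮ.starProjection (u s)‖])
          ((hu.sum_norm_sq_starProjection_le_finrank W).trans (by exact_mod_cast hW))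
    _ = ∑ s, ‖Wᗮ.starProjection ((σ s : 𝕜) • u s)‖ ^ 2 := by
        refine sum_congr rfl fun s _ => ?_
        rw [map_smul, norm_smul, mul_pow, hpyth, RCLike.norm_ofReal, sq_abs]
    _ = ∑ j, ‖Wᗮ.starProjection (∑ s, starRingEnd 𝕜 (V j s) • (σ s : 𝕜) • u s)‖ ^ 2 := by
        simp only [map_sum, map_smul]
        exact (sum_norm_sq_sum_conj_smul hV _).symm
    _ ≤ ∑ j, ‖∑ s, starRingEnd 𝕜 (V j s) • (σ s : 𝕜) • u s - b j‖ ^ 2 := by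
        refine sum_le_sum fun j _ => pow_le_pow_left₀ (norm_nonneg _) ?_ 2
        rw [starProjection_orthogonal_val]
        exact norm_sub_starProjection_le _ (hb j)

end InnerProductSpace

section Bochner

variable {𝕜 H : Type*} [RCLike 𝕜] [NormedAddCommGroup H] [InnerProductSpace 𝕜 H] {m : ℕ}
  {ι : Type*}

def col (A : Fin m → ι → H) (j : ι) : PiLp 2 (fun _ : Fin m => H) :=
  WithLp.toLp 2 fun i => A i j

theorem sum_sum_norm_sq_eq_sum_norm_sq_col [Fintype ι] (A : Fin m → ι → H) :
    ∑ i, ∑ j, ‖A i j‖ ^ 2 = ∑ j, ‖col A j‖ ^ 2 := by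
  rw [sum_comm]
  exact sum_congr rfl fun j _ => (PiLp.norm_sq_eq_of_L2 _ (col A j)).symm

theorem orthonormal_col [DecidableEq ι] {U : Fin m → ι → H}
    (hU : ∀ s t, ∑ i, inner 𝕜 (U i t) (U i s) = if s = t then 1 else 0) :
    Orthonormal 𝕜 (col U) := by
  rw [orthonormal_iff_ite]
  intro s t
  rw [PiLp.inner_apply]
  exact (hU t s).trans (if_congr eq_comm rfl rfl)

theorem crank_eq_finrank_span_col [Fintype ι] (A : Fin m → ι → H) :
    crank 𝕜 A = finrank 𝕜 (span 𝕜 (Set.range (col A))) := by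
  have hbmul : bmul A = Fintype.linearCombination 𝕜 fun j i => A i j := by
    ext x i
    simp [bmul, Fintype.linearCombination_apply]
  have hcol : col A = (WithLp.linearEquiv 2 𝕜 (Fin m → H)).symm ∘ fun j i => A i j := rfl
  rw [crank, hbmul, Fintype.range_linearCombination, hcol, Set.range_comp,
    span_image_linearEquiv, LinearEquiv.finrank_map_eq]

theorem crank_le_card_of_col_mem_span_image [Fintype ι] {κ : Type*} {A : Fin m → ι → H}
    {u : κ → PiLp 2 fun _ : Fin m => H} {T : Finset κ} (hA : ∀ j, col A j ∈ span 𝕜 (u '' T)) :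
    crank 𝕜 A ≤ #T := by
  classical
  have : FiniteDimensional 𝕜 (span 𝕜 (u '' T)) :=
    FiniteDimensional.span_of_finite 𝕜 (T.finite_toSet.image _)
  calc crank 𝕜 A ≤ finrank 𝕜 (span 𝕜 (u '' T)) := by
        rw [crank_eq_finrank_span_col]
        exact finrank_mono (span_le.2 (Set.range_subset_iff.2 hA))
    _ ≤ #T := by
        rw [← coe_image]
        exact (finrank_span_finset_le_card _).trans card_image_le

end Bochner

theorem bochner_eckart_young_mirsky_general {𝕜 H : Type*} [RCLike 𝕜]
    [NormedAddCommGroup H] [InnerProductSpace 𝕜 H]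
    {m n r κ : ℕ} (A : Fin m → Fin n → H)
    (σ : Fin r → ℝ) (hσmono : ∀ s t : Fin r, s ≤ t → σ t ≤ σ s)
    (hσpos : ∀ s, 0 < σ s)
    (U : Fin m → Fin r → H) (V : Matrix (Fin n) (Fin r) 𝕜)
    (hU : ∀ s t : Fin r, (∑ i, inner (𝕜 := 𝕜) (U i t) (U i s)) =
      if s = t then 1 else 0)
    (hV : V.conjTranspose * V = 1)
    (hSVD : ∀ i j, A i j = ∑ s, ((σ s : 𝕜) * (starRingEnd 𝕜) (V j s)) • U i s)
    (B₀ : Fin m → Fin n → H)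
    (hB₀ : ∀ i j, B₀ i j = ∑ s : Fin r,
      if (s : ℕ) < κ then ((σ s : 𝕜) * (starRingEnd 𝕜) (V j s)) • U i s else 0) :
    crank 𝕜 B₀ ≤ κ ∧
    Real.sqrt (∑ i, ∑ j, ‖A i j - B₀ i j‖ ^ 2) =
      Real.sqrt (∑ s : Fin r, if κ ≤ (s : ℕ) then σ s ^ 2 else 0) ∧
    ∀ B : Fin m → Fin n → H, crank 𝕜 B ≤ κ →
      Real.sqrt (∑ s : Fin r, if κ ≤ (s : ℕ) then σ s ^ 2 else 0) ≤
        Real.sqrt (∑ i, ∑ j, ‖A i j - B i j‖ ^ 2) := by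
  have hu : Orthonormal 𝕜 (col U) := orthonormal_col hU
  have hAcol : ∀ j, col A j = ∑ s, starRingEnd 𝕜 (V j s) • (σ s : 𝕜) • col U s := by
    intro j
    ext i
    simp [col, hSVD, smul_smul, mul_comm]
  have hB₀col : ∀ j, col B₀ j =
      ∑ s, starRingEnd 𝕜 (V j s) • if (s : ℕ) < κ then (σ s : 𝕜) • col U s else 0 := by
    intro j
    ext i
    simp only [col, hB₀, smul_ite, smul_zero, WithLp.ofLp_sum, Finset.sum_apply]
    refine sum_congr rfl fun s _ => ?_
    split_ifs <;> simp [smul_smul, mul_comm]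
  have hcol_sub : ∀ (B : Fin m → Fin n → H) j,
      col (fun i j => A i j - B i j) j = col A j - col B j := fun _ _ => rfl
  refine ⟨?_, ?_, fun B hB => Real.sqrt_le_sqrt ?_⟩
  · exact (crank_le_card_of_col_mem_span_image fun j =>
      hB₀col j ▸ sum_smul_ite_mem_span_image _ _ _).trans (by simp [Fin.card_filter_val_lt])
  · rw [sum_sum_norm_sq_eq_sum_norm_sq_col (fun i j => A i j - B₀ i j)]
    simp only [hcol_sub, hAcol, hB₀col]
    rw [sum_norm_sq_sum_conj_smul_sub_truncation σ hu hV]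
  · have : FiniteDimensional 𝕜 (span 𝕜 (Set.range (col B))) :=
      FiniteDimensional.span_of_finite 𝕜 (Set.finite_range _)
    rw [sum_sum_norm_sq_eq_sum_norm_sq_col (fun i j => A i j - B i j)]
    simp only [hcol_sub, hAcol]
    exact sum_ite_sq_le_sum_norm_sq_sub_of_finrank_le hσmono (fun s => (hσpos s).le) hu hV
      ((crank_eq_finrank_span_col B).symm.trans_le hB) fun j => subset_span ⟨j, rfl⟩

/-- Eckart–Young–Mirsky for Bochner matrices (Frobenius-type norm): given an SVD
`A = U Σ V*` of a nonzero `A` with column rank `r` and `1 ≤ κ ≤ r`, the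
`κ`-truncated SVD `B₀` has `rank_c B₀ ≤ κ`, its error is
`(σ_{κ+1}² + ⋯ + σ_r²)^{1/2}`, and it minimizes `‖A − B‖_{ℓ²(H)}` over all
Bochner matrices `B` of column rank at most `κ`. -/
theorem bochner_eckart_young_mirsky {𝕜 H : Type*} [RCLike 𝕜]
    [NormedAddCommGroup H] [InnerProductSpace 𝕜 H] [CompleteSpace H]
    {m n r κ : ℕ} (A : Fin m → Fin n → H)
    (hA : A ≠ fun _ _ => 0) (hr : crank 𝕜 A = r) (hκ1 : 1 ≤ κ) (hκr : κ ≤ r)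
    (σ : Fin r → ℝ) (hσmono : ∀ s t : Fin r, s ≤ t → σ t ≤ σ s)
    (hσpos : ∀ s, 0 < σ s)
    (U : Fin m → Fin r → H) (V : Matrix (Fin n) (Fin r) 𝕜)
    (hU : ∀ s t : Fin r, (∑ i, inner (𝕜 := 𝕜) (U i t) (U i s)) =
      if s = t then 1 else 0)
    (hV : V.conjTranspose * V = 1)
    (hSVD : ∀ i j, A i j = ∑ s, ((σ s : 𝕜) * (starRingEnd 𝕜) (V j s)) • U i s)
    (B₀ : Fin m → Fin n → H)
    (hB₀ : ∀ i j, B₀ i j = ∑ s : Fin r,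
      if (s : ℕ) < κ then ((σ s : 𝕜) * (starRingEnd 𝕜) (V j s)) • U i s else 0) :
    crank 𝕜 B₀ ≤ κ ∧
    Real.sqrt (∑ i, ∑ j, ‖A i j - B₀ i j‖ ^ 2) =
      Real.sqrt (∑ s : Fin r, if κ ≤ (s : ℕ) then σ s ^ 2 else 0) ∧
    ∀ B : Fin m → Fin n → H, crank 𝕜 B ≤ κ →
      Real.sqrt (∑ s : Fin r, if κ ≤ (s : ℕ) then σ s ^ 2 else 0) ≤
        Real.sqrt (∑ i, ∑ j, ‖A i j - B i j‖ ^ 2) :=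
  bochner_eckart_young_mirsky_general A σ hσmono hσpos U V hU hV hSVD B₀ hB₀
end
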